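/- Let Θ₀¹,…,Θ₀ᴷ be null hypotheses with Θ₀ = ∪_j Θ₀ʲ, and (E₁,…,E_K) a compound e-variable, i.e., ∑_{k : θ∈Θ₀ᵏ} E_θ[E_k] ≤ K for all θ ∈ Θ₀. For each j let S_j be sufficient for Θ₀ʲ ∪ Θ₁ and G_j := E[E_j | S_j]. Then (G₁,…,G_K) is again a compound e-variable, and for any concave utility f and θ ∈ Θ₁ ∪ Θ₀ʲ, E_θ[f(G_j)] ≥ E_θ[f(E_j)] when both sides are defined. -/

import Mathlib

open MeasureTheory ENNReal Filter Set
open scoped Classical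
noncomputable section

/-- The positive part of an extended real, as an extended nonnegative real. -/
def erealPos (a : EReal) : ℝ≥0∞ := if a = ⊤ then ⊤ else ENNReal.ofReal a.toReal

/-- Generalized expectation `E[f] = E[f⁺] - E[f⁻]`, valued in the extended reals. -/
def eexp {Ω : Type*} {mΩ : MeasurableSpace Ω} (μ : Measure Ω) (f : Ω → EReal) : EReal :=
  ((∫⁻ ω, erealPos (f ω) ∂μ : ℝ≥0∞) : EReal) - ((∫⁻ ω, erealPos (-(f ω)) ∂μ : ℝ≥0∞) : EReal)

/-- The expectation of an extended-real random variable is (well-)defined when at least one of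
the expectations of its positive and negative parts is finite. -/
def ExpDefined {Ω : Type*} {mΩ : MeasurableSpace Ω} (μ : Measure Ω) (f : Ω → EReal) : Prop :=
  (∫⁻ ω, erealPos (f ω) ∂μ) < ⊤ ∨ (∫⁻ ω, erealPos (-(f ω)) ∂μ) < ⊤

/-- Logarithm on `[0,∞]`, with `log 0 = -∞` and `log ∞ = ∞`. -/
def elog (x : ℝ≥0∞) : EReal := if x = 0 then ⊥ else if x = ⊤ then ⊤ else ((Real.log x.toReal : ℝ) : EReal)

/-- Ratio on `[0,∞]` with the conventions `0/0 = 0` and `∞/∞ = 1`. -/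
def eratio (a b : ℝ≥0∞) : ℝ≥0∞ := if a = ⊤ ∧ b = ⊤ then 1 else a / b

/-- `g` is a version of the conditional expectation of the nonnegative `h` given the
sub-σ-field `m`, under the measure `μ`. -/
def IsCondExpNN {Ω : Type*} {mΩ : MeasurableSpace Ω} (m : MeasurableSpace Ω)
    (μ : @Measure Ω mΩ) (h g : Ω → ℝ≥0∞) : Prop :=
  Measurable[m] g ∧ ∀ A : Set Ω, MeasurableSet[m] A → ∫⁻ ω in A, g ω ∂μ = ∫⁻ ω in A, h ω ∂μ

/-- `g` is a universal (θ-free) version of the conditional expectation of `h` given `m`,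
simultaneously under all measures `P θ`, `θ` ranging over a set `T` of parameters. -/
def IsUnivCondExpNN {Ω Θ : Type*} {mΩ : MeasurableSpace Ω} (m : MeasurableSpace Ω)
    (P : Θ → @Measure Ω mΩ) (T : Set Θ) (h g : Ω → ℝ≥0∞) : Prop :=
  Measurable[m] g ∧ ∀ θ ∈ T, IsCondExpNN m (P θ) h g

/-- A sub-σ-field `m` is sufficient for the family `P` over the parameter set `T`:
every nonnegative measurable function admits a universal conditional expectation given `m`. -/
def IsSufficient {Ω Θ : Type*} {mΩ : MeasurableSpace Ω} (m : MeasurableSpace Ω)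
    (P : Θ → @Measure Ω mΩ) (T : Set Θ) : Prop :=
  m ≤ mΩ ∧ ∀ h : Ω → ℝ≥0∞, Measurable[mΩ] h → ∃ g, IsUnivCondExpNN m P T h g

/-- Kullback–Leibler divergence, valued in `[0,∞]` (as an extended real):
`∫ log(dμ/dν) dμ` when `μ ≪ ν`, and `+∞` otherwise. -/
def klDiv' {Ω : Type*} {mΩ : MeasurableSpace Ω} (μ ν : Measure Ω) : EReal :=
  if μ ≪ ν then eexp μ (fun ω => elog (μ.rnDeriv ν ω)) else ⊤

/-- `F : [0,∞] → [-∞,∞]` is the extension by limits of a concave utility `f : (0,∞) → ℝ`,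
i.e. `F 0 = lim_{x↓0} f x`, `F ∞ = lim_{x→∞} f x`, and `F = f` in between. -/
def IsConcaveExtension (f : ℝ → ℝ) (F : ℝ≥0∞ → EReal) : Prop :=
  ConcaveOn ℝ (Set.Ioi 0) f ∧
  (∀ x : ℝ≥0∞, x ≠ 0 → x ≠ ⊤ → F x = ((f x.toReal : ℝ) : EReal)) ∧
  Tendsto (fun x : ℝ => ((f x : ℝ) : EReal)) (nhdsWithin 0 (Set.Ioi 0)) (nhds (F 0)) ∧
  Tendsto (fun x : ℝ => ((f x : ℝ) : EReal)) atTop (nhds (F ⊤))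

/-!
The first claim holds because, under every `θ ∈ Θ₀ j`, `G j` has the same expectation as `E j`.

The second is conditional Jensen for the extended utility `F`, integrated. Let `p` and `n` be
versions of `E[F(E)⁺ | S]` and `E[F(E)⁻ | S]` (they exist by sufficiency); it suffices that
`p - n ≤ F(G)` almost surely. If `ℓ` is an affine majorant of `f`, then `F ≤ ℓ`, and on
`{G ≤ M}`, where `E` is integrable, conditioning commutes with `ℓ`, so comparing set integrals
gives `p - n ≤ ℓ(G)` almost surely. The infimum of the tangent lines of `f` at rational points is
`F` on `[0, ∞)`. On `{G = ∞}`, use the constant majorant `F ∞` if it is finite. If `F ∞ = -∞`,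
a majorant of negative slope makes `E[F(E)⁻ | S]` infinite there.
-/

open Topology

@[simp] lemma erealPos_coe (r : ℝ) : erealPos r = ENNReal.ofReal r := by simp [erealPos]

@[simp] lemma erealPos_neg_coe (r : ℝ) : erealPos (-r) = ENNReal.ofReal (-r) := by
  rw [← EReal.coe_neg, erealPos_coe]

lemma measurable_erealPos : Measurable erealPos :=
  Measurable.ite (measurableSet_singleton ⊤) measurable_const
    (ENNReal.measurable_ofReal.comp measurable_ereal_toReal)

lemma monotone_erealPos : Monotone erealPos := by
  intro x y hxy
  induction x using EReal.rec with
  | bot => simp [erealPos]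
  | top => simp [top_le_iff.mp hxy]
  | coe a =>
    induction y using EReal.rec with
    | bot => simp at hxy
    | top => simp [erealPos]
    | coe b => simpa using ENNReal.ofReal_le_ofReal (EReal.coe_le_coe_iff.mp hxy)

lemma coe_erealPos_sub_coe_erealPos_neg (x : EReal) :
    (erealPos x : EReal) - erealPos (-x) = x := by
  induction x using EReal.rec with
  | bot => simp [erealPos]
  | top => simp [erealPos]
  | coe a =>
    simp only [erealPos, EReal.coe_ne_top, ← EReal.coe_neg, if_false, EReal.toReal_coe,
      ENNReal.ofReal, EReal.coe_nnreal_eq_coe_real, Real.coe_toNNReal', ← EReal.coe_sub]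
    congr 1
    rcases le_total 0 a with h | h <;> simp [h]

lemma EReal.coe_ennreal_sub_le_of_add_le {a b c d : ℝ≥0∞} (h : a + d ≤ c + b)
    (hcd : c ≠ ⊤ ∨ d ≠ ⊤) : (a : EReal) - b ≤ c - d := by
  induction a using ENNReal.recTopCoe <;> induction b using ENNReal.recTopCoe <;>
    induction c using ENNReal.recTopCoe <;> induction d using ENNReal.recTopCoe <;>
    simp_all
  simp only [EReal.coe_nnreal_eq_coe_real, ← EReal.coe_sub, EReal.coe_le_coe_iff]
  have := NNReal.coe_le_coe.2 (ENNReal.coe_le_coe.1 (by exact_mod_cast h))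
  push_cast at this
  linarith

lemma EReal.add_le_of_coe_ennreal_sub_le {a b c d : ℝ≥0∞} (hb : b ≠ ⊤)
    (h : (a : EReal) - b ≤ c - d) : a + d ≤ c + b := by
  induction a using ENNReal.recTopCoe <;> induction b using ENNReal.recTopCoe <;>
    induction c using ENNReal.recTopCoe <;> induction d using ENNReal.recTopCoe <;>
    simp_all [EReal.coe_nnreal_eq_coe_real, ← EReal.coe_sub]
  rw [← ENNReal.coe_add, ← ENNReal.coe_add, ENNReal.coe_le_coe, ← NNReal.coe_le_coe]
  push_cast
  linarith

def IsSupergradient (f : ℝ → ℝ) (q a : ℝ) : Prop :=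
  ∀ x, 0 < x → f x ≤ f q + a * (x - q)

lemma ConcaveOn.exists_isSupergradient {f : ℝ → ℝ} (hf : ConcaveOn ℝ (Ioi 0) f) {q : ℝ}
    (hq : 0 < q) : ∃ a, IsSupergradient f q a := by
  set S := (fun x => (f x - f q) / (x - q)) '' Ioi q
  have hS : S.Nonempty := ⟨_, q + 1, by simp, rfl⟩
  have hle_left : ∀ x, 0 < x → x < q → ∀ s ∈ S, s ≤ (f q - f x) / (q - x) := by
    rintro x hx hxq s ⟨y, hy, rfl⟩
    exact hf.slope_anti_adjacent hx (hq.trans hy) hxq hy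
  have hbdd : BddAbove S := ⟨_, hle_left (q / 2) (by linarith) (by linarith)⟩
  refine ⟨sSup S, fun x hx => ?_⟩
  rcases lt_trichotomy x q with hxq | rfl | hxq
  · have h := csSup_le hS (hle_left x hx hxq)
    rw [le_div_iff₀ (by linarith)] at h
    nlinarith
  · simp
  · have h := le_csSup hbdd ⟨x, hxq, rfl⟩
    rw [div_le_iff₀ (by linarith)] at h
    linarith

lemma IsSupergradient.anti {f : ℝ → ℝ} {q r a b : ℝ} (ha : IsSupergradient f q a)
    (hb : IsSupergradient f r b) (hq : 0 < q) (hqr : q < r) : b ≤ a := by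
  have h1 := ha r (hq.trans hqr)
  have h2 := hb q hq
  nlinarith

lemma IsSupergradient.tendsto_atBot {f : ℝ → ℝ} {q a : ℝ} (ha : IsSupergradient f q a)
    (hneg : a < 0) : Tendsto f atTop atBot := by
  refine tendsto_atBot_mono' atTop ?_ (tendsto_atBot_add_const_left _ (f q)
    ((tendsto_atTop_add_const_right _ (-q) tendsto_id).const_mul_atTop_of_neg hneg))
  filter_upwards [eventually_gt_atTop 0] with x hx
  simpa [sub_eq_add_neg] using ha x hx

namespace IsConcaveExtension

variable {f : ℝ → ℝ} {F : ℝ≥0∞ → EReal}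

lemma tendsto_nhdsGT (hF : IsConcaveExtension f F) {z : ℝ≥0∞} (hz : z ≠ ⊤) :
    Tendsto (fun x => (f x : EReal)) (𝓝[>] z.toReal) (𝓝 (F z)) := by
  rcases eq_or_ne z 0 with rfl | hz0
  · simpa using hF.2.2.1
  rw [hF.2.1 z hz0 hz]
  have hpos : 0 < z.toReal := ENNReal.toReal_pos hz0 hz
  exact (EReal.tendsto_coe.2 ((hF.1.continuousOn isOpen_Ioi).continuousAt
    (isOpen_Ioi.mem_nhds hpos))).mono_left nhdsWithin_le_nhds

lemma le_affine (hF : IsConcaveExtension f F) {a b : ℝ} (h : ∀ x, 0 < x → f x ≤ a * x + b)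
    {z : ℝ≥0∞} (hz : z ≠ ⊤) : F z ≤ ((a * z.toReal + b : ℝ) : EReal) := by
  refine le_of_tendsto_of_tendsto (hF.tendsto_nhdsGT hz) (EReal.tendsto_coe.2
    ((Continuous.tendsto (f := fun x => a * x + b) (by fun_prop) _).mono_left
      nhdsWithin_le_nhds)) ?_
  filter_upwards [self_mem_nhdsWithin] with x hx
  exact EReal.coe_le_coe_iff.2 (h x (ENNReal.toReal_nonneg.trans_lt hx))

lemma measurable (hF : IsConcaveExtension f F) : Measurable F := by
  have hf : Measurable ((Ioi (0 : ℝ)).piecewise f fun _ => f 1) :=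
    (hF.1.continuousOn isOpen_Ioi).measurable_piecewise continuousOn_const measurableSet_Ioi
  have hF_eq : F = fun z => if z = 0 then F 0 else if z = ⊤ then F ⊤ else
      (((Ioi (0 : ℝ)).piecewise f fun _ => f 1) z.toReal : EReal) := by
    funext z
    by_cases hz0 : z = 0
    · simp [hz0]
    by_cases hz : z = ⊤
    · simp [hz]
    rw [if_neg hz0, if_neg hz, hF.2.1 z hz0 hz,
      piecewise_eq_of_mem _ _ _ (mem_Ioi.2 (ENNReal.toReal_pos hz0 hz))]
  rw [hF_eq]
  exact Measurable.ite (measurableSet_singleton 0) measurable_const <|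
    Measurable.ite (measurableSet_singleton ⊤) measurable_const <|
      (hf.comp ENNReal.measurable_toReal).coe_real_ereal

lemma le_of_forall_le_supergradient (hF : IsConcaveExtension f F) {s : ℚ → ℝ}
    (hs : ∀ q : ℚ, 0 < q → IsSupergradient f q (s q)) {z : ℝ≥0∞} (hz : z ≠ ⊤) {c : EReal}
    (hc : ∀ q : ℚ, 0 < q → c ≤ ((f q + s q * (z.toReal - q) : ℝ) : EReal)) : c ≤ F z := by
  obtain ⟨u, hu_anti, hzu, hu_lim⟩ := Real.exists_seq_rat_strictAnti_tendsto z.toReal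
  have hu_pos : ∀ k, 0 < u k := fun k => by exact_mod_cast ENNReal.toReal_nonneg.trans_lt (hzu k)
  have hu : Tendsto (fun k => (u k : ℝ)) atTop (𝓝[>] z.toReal) :=
    tendsto_nhdsWithin_iff.2 ⟨hu_lim, Eventually.of_forall hzu⟩
  -- Supergradients decrease, so for `q ∈ (z, u 0]` the tangent at `q`, evaluated at `z`, is at
  -- most `f q + s (u 0) * (z - q)`, which tends to `F z` as `q ↓ z`.
  have h0 : Tendsto (fun x : ℝ => ((s (u 0) * (z.toReal - x) : ℝ) : EReal)) (𝓝[>] z.toReal)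
      (𝓝 0) := by
    rw [← EReal.coe_zero, EReal.tendsto_coe]
    simpa using (Continuous.tendsto (f := fun x => s (u 0) * (z.toReal - x)) (by fun_prop)
      z.toReal).mono_left nhdsWithin_le_nhds
  have hlim := (EReal.continuousAt_add (p := (F z, 0)) (Or.inr (by simp))
    (Or.inr (by simp))).tendsto.comp ((hF.tendsto_nhdsGT hz).prodMk_nhds h0)
  rw [add_zero] at hlim
  refine ge_of_tendsto (hlim.comp hu) ?_
  filter_upwards [eventually_gt_atTop 0] with k hk
  have hslope : s (u 0) ≤ s (u k) :=
    (hs _ (hu_pos k)).anti (hs _ (hu_pos 0)) (by exact_mod_cast hu_pos k)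
      (by exact_mod_cast hu_anti hk)
  calc c ≤ ((f (u k) + s (u k) * (z.toReal - u k) : ℝ) : EReal) := hc _ (hu_pos k)
    _ ≤ ((f (u k) + s (u 0) * (z.toReal - u k) : ℝ) : EReal) := EReal.coe_le_coe_iff.2
      (by nlinarith [mul_le_mul_of_nonpos_right hslope (sub_nonpos.2 (hzu k).le)])
    _ = _ := EReal.coe_add _ _

lemma le_of_top_eq_coe (hF : IsConcaveExtension f F) {L : ℝ} (hL : F ⊤ = L) (z : ℝ≥0∞) :
    F z ≤ L := by
  have hlim : Tendsto f atTop (𝓝 L) := EReal.tendsto_coe.1 (hL ▸ hF.2.2.2)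
  have hmono : ∀ x y, 0 < x → x < y → f x ≤ f y := by
    intro x y hx hxy
    obtain ⟨a, ha⟩ := hF.1.exists_isSupergradient (hx.trans hxy)
    have ha_nonneg : 0 ≤ a := not_lt.1 fun hneg =>
      not_tendsto_nhds_of_tendsto_atBot (ha.tendsto_atBot hneg) L hlim
    nlinarith [ha x hx]
  rcases eq_or_ne z ⊤ with rfl | hz
  · exact hL.le
  have hfL : ∀ x, 0 < x → f x ≤ 0 * x + L := fun x hx => by
    simpa using ge_of_tendsto hlim ((eventually_gt_atTop x).mono fun y hy => hmono x y hx hy)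
  simpa using hF.le_affine hfL hz

lemma exists_affine_neg_slope (hF : IsConcaveExtension f F) (hbot : F ⊤ = ⊥) :
    ∃ a b : ℝ, a < 0 ∧ ∀ x, 0 < x → f x ≤ a * x + b := by
  have hlim : Tendsto f atTop atBot := by
    rw [tendsto_atBot]
    intro c
    have := EReal.tendsto_nhds_bot_iff_real.1 (hbot ▸ hF.2.2.2) c
    filter_upwards [this] with x hx using (EReal.coe_lt_coe_iff.1 hx).le
  obtain ⟨y, hy, hy1⟩ := ((hlim.eventually_lt_atBot (f 1)).and (eventually_gt_atTop 1)).exists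
  obtain ⟨a, ha⟩ := hF.1.exists_isSupergradient (zero_lt_one.trans hy1)
  refine ⟨a, f y - a * y, ?_, fun x hx => by linarith [ha x hx]⟩
  nlinarith [ha 1 one_pos]

lemma ofReal_neg_mul_le (hF : IsConcaveExtension f F) (hbot : F ⊤ = ⊥) {a b : ℝ}
    (h : ∀ x, 0 < x → f x ≤ a * x + b) (z : ℝ≥0∞) :
    ENNReal.ofReal (-a) * z ≤ erealPos (-F z) + ENNReal.ofReal b := by
  rcases eq_or_ne z ⊤ with rfl | hz
  · simp [hbot, erealPos]
  have hneg : ENNReal.ofReal (-(a * z.toReal + b)) ≤ erealPos (-F z) := by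
    rw [← erealPos_neg_coe]
    exact monotone_erealPos (EReal.neg_le_neg_iff.2 (hF.le_affine h hz))
  calc ENNReal.ofReal (-a) * z = ENNReal.ofReal (-(a * z.toReal + b) + b) := by
        rw [← ENNReal.ofReal_toReal hz, ← ENNReal.ofReal_mul' ENNReal.toReal_nonneg,
          ENNReal.toReal_ofReal ENNReal.toReal_nonneg]
        ring_nf
    _ ≤ ENNReal.ofReal (-(a * z.toReal + b)) + ENNReal.ofReal b := ENNReal.ofReal_add_le
    _ ≤ _ := by gcongr

end IsConcaveExtension

lemma ENNReal.add_le_add_of_add_le_of_add_eq {a b c u v w : ℝ≥0∞} (h₁ : a + v ≤ b + u)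
    (h₂ : b + w = c + v) (hv : v ≠ ⊤) : a + w ≤ c + u := by
  refine (ENNReal.add_le_add_iff_right hv).1 ?_
  calc a + w + v = a + v + w := by ring
    _ ≤ b + u + w := by gcongr
    _ = c + v + u := by rw [add_right_comm, h₂]
    _ = c + u + v := by ring

section CondExp

variable {Ω : Type*} {m mΩ : MeasurableSpace Ω} {μ : Measure Ω}

lemma lintegral_ofReal_add_lintegral_ofReal_neg_eq {V W : Ω → ℝ} (hV : Integrable V μ)
    (hW : Integrable W μ) (h : ∫ ω, V ω ∂μ = ∫ ω, W ω ∂μ) :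
    ∫⁻ ω, ENNReal.ofReal (V ω) ∂μ + ∫⁻ ω, ENNReal.ofReal (-W ω) ∂μ =
      ∫⁻ ω, ENNReal.ofReal (W ω) ∂μ + ∫⁻ ω, ENNReal.ofReal (-V ω) ∂μ := by
  rw [integral_eq_lintegral_pos_part_sub_lintegral_neg_part hV,
    integral_eq_lintegral_pos_part_sub_lintegral_neg_part hW] at h
  have hV₁ := hV.lintegral_lt_top.ne
  have hV₂ := hV.neg.lintegral_lt_top.ne
  have hW₁ := hW.lintegral_lt_top.ne
  have hW₂ := hW.neg.lintegral_lt_top.ne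
  simp only [Pi.neg_apply] at hV₂ hW₂
  rw [← ENNReal.toReal_eq_toReal_iff' (ENNReal.add_ne_top.2 ⟨hV₁, hW₂⟩)
    (ENNReal.add_ne_top.2 ⟨hW₁, hV₂⟩), ENNReal.toReal_add hV₁ hW₂, ENNReal.toReal_add hW₁ hV₂]
  linarith

lemma lintegral_erealPos_add_le {U : Ω → EReal} {V : Ω → ℝ} (hV : AEMeasurable V μ)
    (hUV : ∀ᵐ ω ∂μ, U ω ≤ V ω) :
    ∫⁻ ω, erealPos (U ω) ∂μ + ∫⁻ ω, ENNReal.ofReal (-V ω) ∂μ ≤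
      ∫⁻ ω, ENNReal.ofReal (V ω) ∂μ + ∫⁻ ω, erealPos (-U ω) ∂μ :=
  calc _ ≤ ∫⁻ ω, (erealPos (U ω) + ENNReal.ofReal (-V ω)) ∂μ := le_lintegral_add _ _
    _ ≤ ∫⁻ ω, (ENNReal.ofReal (V ω) + erealPos (-U ω)) ∂μ := by
      refine lintegral_mono_ae ?_
      filter_upwards [hUV] with ω hω
      simpa using
        add_le_add (monotone_erealPos hω) (monotone_erealPos (EReal.neg_le_neg_iff.2 hω))
    _ = _ := lintegral_add_left' hV.ennreal_ofReal _

namespace IsCondExpNN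

variable {h g : Ω → ℝ≥0∞}

lemma lintegral_eq (hg : IsCondExpNN m μ h g) : ∫⁻ ω, g ω ∂μ = ∫⁻ ω, h ω ∂μ := by
  simpa using hg.2 univ MeasurableSet.univ

lemma restrict (hm : m ≤ mΩ) (hg : IsCondExpNN m μ h g) {S : Set Ω} (hS : MeasurableSet[m] S) :
    IsCondExpNN m (μ.restrict S) h g :=
  ⟨hg.1, fun A hA => by
    simpa only [Measure.restrict_restrict (hm A hA)] using hg.2 _ (hA.inter hS)⟩

lemma setIntegral_toReal_eq (hm : m ≤ mΩ) (hh : AEMeasurable h μ) (hg : IsCondExpNN m μ h g)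
    {A : Set Ω} (hA : MeasurableSet[m] A) (hfin : ∫⁻ ω in A, h ω ∂μ ≠ ⊤) :
    ∫ ω in A, (h ω).toReal ∂μ = ∫ ω in A, (g ω).toReal ∂μ := by
  have hg_meas : AEMeasurable g (μ.restrict A) := (hg.1.mono hm le_rfl).aemeasurable
  have hgfin : ∫⁻ ω in A, g ω ∂μ ≠ ⊤ := hg.2 A hA ▸ hfin
  rw [integral_toReal hh.restrict (ae_lt_top' hh.restrict hfin),
    integral_toReal hg_meas (ae_lt_top' hg_meas hgfin), hg.2 A hA]

end IsCondExpNN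

theorem ae_sub_le_of_le_integrable [IsFiniteMeasure μ] (hm : m ≤ mΩ) {U : Ω → EReal}
    {p n : Ω → ℝ≥0∞} (hp : IsCondExpNN m μ (fun ω => erealPos (U ω)) p)
    (hn : IsCondExpNN m μ (fun ω => erealPos (-U ω)) n) {V W : Ω → ℝ}
    (hUV : ∀ᵐ ω ∂μ, U ω ≤ V ω) (hV : Integrable V μ) (hW : Integrable W μ)
    (hWm : Measurable[m] W)
    (hVW : ∀ A, MeasurableSet[m] A → ∫ ω in A, V ω ∂μ = ∫ ω in A, W ω ∂μ) :
    ∀ᵐ ω ∂μ, (p ω : EReal) - n ω ≤ W ω := by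
  have hset : ∀ A, MeasurableSet[m] A →
      ∫⁻ ω in A, (p ω + ENNReal.ofReal (-W ω)) ∂μ ≤
        ∫⁻ ω in A, (ENNReal.ofReal (W ω) + n ω) ∂μ := by
    intro A hA
    rw [lintegral_add_left (hp.1.mono hm le_rfl), lintegral_add_right _ (hn.1.mono hm le_rfl),
      hp.2 A hA, hn.2 A hA]
    exact ENNReal.add_le_add_of_add_le_of_add_eq
      (lintegral_erealPos_add_le hV.1.aemeasurable.restrict (ae_restrict_of_ae hUV))
      (lintegral_ofReal_add_lintegral_ofReal_neg_eq hV.restrict hW.restrict (hVW A hA))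
      hV.neg.restrict.lintegral_lt_top.ne
  have hle_meas : Measurable[m] fun ω => p ω + ENNReal.ofReal (-W ω) :=
    hp.1.add hWm.neg.ennreal_ofReal
  have hge_meas : Measurable[m] fun ω => ENNReal.ofReal (W ω) + n ω :=
    hWm.ennreal_ofReal.add hn.1
  have hae := ae_le_of_forall_setLIntegral_le_of_sigmaFinite (μ := μ.trim hm)
    (g := fun ω => ENNReal.ofReal (W ω) + n ω) hle_meas
    fun A hA _ => by
      rw [setLIntegral_trim hm hle_meas hA, setLIntegral_trim hm hge_meas hA]
      exact hset A hA
  filter_upwards [ae_of_ae_trim hm hae] with ω hω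
  calc (p ω : EReal) - n ω ≤ (ENNReal.ofReal (W ω) : EReal) - (ENNReal.ofReal (-W ω) : ℝ≥0∞) :=
        EReal.coe_ennreal_sub_le_of_add_le hω (Or.inl ENNReal.ofReal_ne_top)
    _ = W ω := by simpa using coe_erealPos_sub_coe_erealPos_neg (W ω)

end CondExp

section CondJensen

variable {Ω : Type*} {m mΩ : MeasurableSpace Ω} {μ : Measure Ω} [IsFiniteMeasure μ]
  {X G p n : Ω → ℝ≥0∞}

namespace IsCondExpNN

theorem ae_sub_le_affine_of_lintegral_ne_top (hm : m ≤ mΩ) (hX : Measurable X)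
    (hG : IsCondExpNN m μ X G) (hXfin : ∫⁻ ω, X ω ∂μ ≠ ⊤) {U : Ω → EReal}
    (hp : IsCondExpNN m μ (fun ω => erealPos (U ω)) p)
    (hn : IsCondExpNN m μ (fun ω => erealPos (-U ω)) n) {a b : ℝ}
    (hU : ∀ ω, X ω ≠ ⊤ → U ω ≤ ((a * (X ω).toReal + b : ℝ) : EReal)) :
    ∀ᵐ ω ∂μ, (p ω : EReal) - n ω ≤ ((a * (G ω).toReal + b : ℝ) : EReal) := by
  have hGfin : ∫⁻ ω, G ω ∂μ ≠ ⊤ := hG.lintegral_eq ▸ hXfin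
  have hXint := integrable_toReal_of_lintegral_ne_top hX.aemeasurable hXfin
  have hGint := integrable_toReal_of_lintegral_ne_top (hG.1.mono hm le_rfl).aemeasurable hGfin
  refine ae_sub_le_of_le_integrable hm hp hn (V := fun ω => a * (X ω).toReal + b) ?_
    ((hXint.const_mul a).add (integrable_const b)) ((hGint.const_mul a).add (integrable_const b))
    ((hG.1.ennreal_toReal.const_mul a).add_const b) fun A hA => ?_
  · filter_upwards [ae_lt_top hX hXfin] with ω hω using hU ω hω.ne
  · rw [integral_add (hXint.const_mul a).integrableOn (integrable_const b).integrableOn,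
      integral_add (hGint.const_mul a).integrableOn (integrable_const b).integrableOn,
      integral_const_mul, integral_const_mul, hG.setIntegral_toReal_eq hm hX.aemeasurable hA
        (ne_top_of_le_ne_top hXfin (setLIntegral_le_lintegral _ _))]

theorem ae_sub_le_affine (hm : m ≤ mΩ) (hX : Measurable X) (hG : IsCondExpNN m μ X G)
    {U : Ω → EReal} (hp : IsCondExpNN m μ (fun ω => erealPos (U ω)) p)
    (hn : IsCondExpNN m μ (fun ω => erealPos (-U ω)) n) {a b : ℝ}
    (hU : ∀ ω, X ω ≠ ⊤ → U ω ≤ ((a * (X ω).toReal + b : ℝ) : EReal)) :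
    ∀ᵐ ω ∂μ, G ω ≠ ⊤ → (p ω : EReal) - n ω ≤ ((a * (G ω).toReal + b : ℝ) : EReal) := by
  have hM : ∀ M : ℕ, ∀ᵐ ω ∂μ, G ω ≤ M →
      (p ω : EReal) - n ω ≤ ((a * (G ω).toReal + b : ℝ) : EReal) := by
    intro M
    have hS : MeasurableSet[m] {ω | G ω ≤ M} := measurableSet_le hG.1 measurable_const
    have hSfin : ∫⁻ ω in {ω | G ω ≤ M}, X ω ∂μ ≠ ⊤ := by
      rw [← hG.2 _ hS]
      refine ne_top_of_le_ne_top (ENNReal.mul_ne_top (ENNReal.natCast_ne_top M)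
        (measure_ne_top μ {ω | G ω ≤ M})) ?_
      rw [← setLIntegral_const]
      exact setLIntegral_mono measurable_const fun ω hω => hω
    exact (ae_restrict_iff' (hm _ hS)).1 (ae_sub_le_affine_of_lintegral_ne_top hm hX
      (hG.restrict hm hS) (by simpa using hSfin) (hp.restrict hm hS) (hn.restrict hm hS) hU)
  filter_upwards [ae_all_iff.2 hM] with ω hω hGω
  obtain ⟨M, hM⟩ := ENNReal.exists_nat_gt hGω
  exact hω M hM.le

theorem ae_eq_top_of_mul_le (hm : m ≤ mΩ) (hX : Measurable X) (hG : IsCondExpNN m μ X G)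
    {U : Ω → EReal} (hn : IsCondExpNN m μ (fun ω => erealPos (-U ω)) n) {c d : ℝ≥0∞}
    (hc : c ≠ 0) (hd : d ≠ ⊤) (hUX : ∀ ω, c * X ω ≤ erealPos (-U ω) + d) :
    ∀ᵐ ω ∂μ, G ω = ⊤ → n ω = ⊤ := by
  have hM : ∀ M : ℕ, μ {ω | G ω = ⊤ ∧ n ω ≤ M} = 0 := by
    intro M
    set A := {ω | G ω = ⊤ ∧ n ω ≤ M}
    have hA : MeasurableSet[m] A :=
      (hG.1 (measurableSet_singleton ⊤)).inter (measurableSet_le hn.1 measurable_const)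
    by_contra hμA
    have hXA : ∫⁻ ω in A, X ω ∂μ = ⊤ := by
      rw [← hG.2 A hA, setLIntegral_congr_fun (hm A hA) fun ω hω => hω.1, setLIntegral_const,
        ENNReal.top_mul hμA]
    -- the negative part of `U` has infinite integral on `A`, but that of its version `n` is finite
    have : (⊤ : ℝ≥0∞) ≤ M * μ A + d * μ A := calc
      ⊤ = ∫⁻ ω in A, c * X ω ∂μ := by rw [lintegral_const_mul c hX, hXA, ENNReal.mul_top hc]
      _ ≤ ∫⁻ ω in A, (erealPos (-U ω) + d) ∂μ := lintegral_mono hUX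
      _ = ∫⁻ ω in A, n ω ∂μ + d * μ A := by
        rw [lintegral_add_right _ measurable_const, setLIntegral_const, hn.2 A hA]
      _ ≤ M * μ A + d * μ A := by
        gcongr
        rw [← setLIntegral_const]
        exact setLIntegral_mono measurable_const fun ω hω => hω.2
    exact (ENNReal.add_ne_top.2 ⟨ENNReal.mul_ne_top (ENNReal.natCast_ne_top M)
      (measure_ne_top μ A), ENNReal.mul_ne_top hd (measure_ne_top μ A)⟩) (top_le_iff.1 this)
  filter_upwards [ae_all_iff.2 fun M => measure_eq_zero_iff_ae_notMem.1 (hM M)] with ω hω hGω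
  by_contra hnω
  obtain ⟨M, hM⟩ := ENNReal.exists_nat_gt hnω
  exact hω M ⟨hGω, hM.le⟩

end IsCondExpNN

theorem IsConcaveExtension.ae_sub_le_comp {f : ℝ → ℝ} {F : ℝ≥0∞ → EReal}
    (hF : IsConcaveExtension f F) (hm : m ≤ mΩ) (hX : Measurable X) (hG : IsCondExpNN m μ X G)
    (hp : IsCondExpNN m μ (fun ω => erealPos (F (X ω))) p)
    (hn : IsCondExpNN m μ (fun ω => erealPos (-F (X ω))) n) :
    ∀ᵐ ω ∂μ, (p ω : EReal) - n ω ≤ F (G ω) := by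
  choose! s hs using fun (q : ℚ) (hq : 0 < q) =>
    hF.1.exists_isSupergradient (Rat.cast_pos.2 hq)
  have hline : ∀ q : ℚ, ∀ᵐ ω ∂μ, 0 < q → G ω ≠ ⊤ →
      (p ω : EReal) - n ω ≤ ((f q + s q * ((G ω).toReal - q) : ℝ) : EReal) := by
    intro q
    by_cases hq : 0 < q
    · have hq_line : ∀ x, 0 < x → f x ≤ s q * x + (f q - s q * q) := fun x hx => by
        linarith [hs q hq x hx]
      filter_upwards [hG.ae_sub_le_affine hm hX hp hn fun ω hω => hF.le_affine hq_line hω]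
        with ω hω _ hGω
      convert hω hGω using 2
      ring
    · exact ae_of_all _ fun ω hq' => absurd hq' hq
  have htop : ∀ᵐ ω ∂μ, G ω = ⊤ → (p ω : EReal) - n ω ≤ F ⊤ := by
    induction hFtop : F ⊤ using EReal.rec with
    | bot =>
      obtain ⟨a, b, ha, hmaj⟩ := hF.exists_affine_neg_slope hFtop
      filter_upwards [hG.ae_eq_top_of_mul_le hm hX hn (by simpa using ha) ENNReal.ofReal_ne_top
        fun ω => hF.ofReal_neg_mul_le hFtop hmaj (X ω)] with ω hω hGω
      simp [hω hGω]
    | coe L =>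
      filter_upwards [ae_sub_le_of_le_integrable hm hp hn (V := fun _ => L) (W := fun _ => L)
        (ae_of_all _ fun ω => hF.le_of_top_eq_coe hFtop (X ω)) (integrable_const L)
        (integrable_const L) measurable_const fun _ _ => rfl] with ω hω _ using hω
    | top => exact ae_of_all _ fun ω _ => le_top
  filter_upwards [ae_all_iff.2 hline, htop] with ω hline htop
  rcases eq_or_ne (G ω) ⊤ with hGω | hGω
  · rw [hGω]
    exact htop hGω
  · exact hF.le_of_forall_le_supergradient hs hGω fun q hq => hline q hq hGω

end CondJensen

theorem eexp_le_of_ae_sub_le {Ω : Type*} {mΩ : MeasurableSpace Ω} {μ : Measure Ω}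
    {U V : Ω → EReal} {p n : Ω → ℝ≥0∞} (hpm : Measurable p) (hV : Measurable V)
    (hp : ∫⁻ ω, p ω ∂μ = ∫⁻ ω, erealPos (U ω) ∂μ)
    (hn : ∫⁻ ω, n ω ∂μ = ∫⁻ ω, erealPos (-U ω) ∂μ)
    (hV_def : ExpDefined μ V) (h : ∀ᵐ ω ∂μ, (p ω : EReal) - n ω ≤ V ω) :
    eexp μ U ≤ eexp μ V := by
  have hpt : ∀ᵐ ω ∂μ, p ω + erealPos (-V ω) ≤ erealPos (V ω) + n ω := by
    filter_upwards [h] with ω hω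
    rcases eq_or_ne (n ω) ⊤ with hnω | hnω
    · simp [hnω]
    · rw [← coe_erealPos_sub_coe_erealPos_neg (V ω)] at hω
      exact EReal.add_le_of_coe_ennreal_sub_le hnω hω
  have hint : ∫⁻ ω, p ω ∂μ + ∫⁻ ω, erealPos (-V ω) ∂μ ≤
      ∫⁻ ω, erealPos (V ω) ∂μ + ∫⁻ ω, n ω ∂μ := by
    have hV_pos : Measurable fun ω => erealPos (V ω) := measurable_erealPos.comp hV
    rw [← lintegral_add_left hpm, ← lintegral_add_left hV_pos]
    exact lintegral_mono_ae hpt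
  rw [hp, hn] at hint
  exact EReal.coe_ennreal_sub_le_of_add_le hint (hV_def.imp LT.lt.ne LT.lt.ne)

/-- Rao–Blackwellization of compound e-variables: if `(E 1, …, E K)` is a compound e-variable
for the nulls `Θ₀ 1, …, Θ₀ K` and, for each `j`, `S j` is sufficient for `Θ₀ j ∪ Θ₁` with
`G j := E[E j | S j]`, then `(G 1, …, G K)` is again a compound e-variable, and for any
concave utility `F` and `θ ∈ Θ₁ ∪ Θ₀ j`, `E_θ[F(G j)] ≥ E_θ[F(E j)]` when both sides are
defined. -/
theorem rao_blackwell_stmt10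
    {Ω Θ : Type*} {mΩ : MeasurableSpace Ω} (P : Θ → Measure Ω)
    [∀ θ, IsProbabilityMeasure (P θ)]
    {K : ℕ} (Θ₀ : Fin K → Set Θ) (Θ₁ : Set Θ)
    (E : Fin K → Ω → ℝ≥0∞) (hE : ∀ j, Measurable[mΩ] (E j))
    -- `(E j)` is a compound e-variable
    (hcomp : ∀ θ ∈ ⋃ j, Θ₀ j,
      (∑ k : Fin K, if θ ∈ Θ₀ k then ∫⁻ ω, E k ω ∂(P θ) else 0) ≤ (K : ℝ≥0∞))
    -- `m j = σ(S j)` is sufficient for `Θ₀ j ∪ Θ₁`, and `G j` is the universal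
    -- conditional expectation of `E j` given `S j`
    (m : Fin K → MeasurableSpace Ω)
    (hsuf : ∀ j, IsSufficient (m j) P (Θ₀ j ∪ Θ₁))
    (G : Fin K → Ω → ℝ≥0∞)
    (hG : ∀ j, IsUnivCondExpNN (m j) P (Θ₀ j ∪ Θ₁) (E j) (G j))
    (f : ℝ → ℝ) (F : ℝ≥0∞ → EReal) (hF : IsConcaveExtension f F) :
    (∀ θ ∈ ⋃ j, Θ₀ j,
      (∑ k : Fin K, if θ ∈ Θ₀ k then ∫⁻ ω, G k ω ∂(P θ) else 0) ≤ (K : ℝ≥0∞)) ∧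
    (∀ j : Fin K, ∀ θ ∈ Θ₁ ∪ Θ₀ j,
      ExpDefined (P θ) (fun ω => F (E j ω)) → ExpDefined (P θ) (fun ω => F (G j ω)) →
        eexp (P θ) (fun ω => F (E j ω)) ≤ eexp (P θ) (fun ω => F (G j ω))) := by
  refine ⟨fun θ hθ => (Finset.sum_congr rfl fun k _ => ?_).trans_le (hcomp θ hθ), ?_⟩
  · split_ifs with hk
    · exact ((hG k).2 θ (Or.inl hk)).lintegral_eq
    · rfl
  intro j θ hθ _ hdefG
  have hθ' : θ ∈ Θ₀ j ∪ Θ₁ := Or.symm hθ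
  obtain ⟨hm, hsuf⟩ := hsuf j
  have hFE : Measurable fun ω => F (E j ω) := hF.measurable.comp (hE j)
  obtain ⟨p, hp⟩ := hsuf _ (measurable_erealPos.comp hFE)
  obtain ⟨n, hn⟩ := hsuf _ (measurable_erealPos.comp hFE.neg)
  exact eexp_le_of_ae_sub_le (hp.1.mono hm le_rfl) (hF.measurable.comp ((hG j).1.mono hm le_rfl))
    (hp.2 θ hθ').lintegral_eq (hn.2 θ hθ').lintegral_eq hdefG
    (hF.ae_sub_le_comp hm (hE j) ((hG j).2 θ hθ') (hp.2 θ hθ') (hn.2 θ hθ'))
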